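/- arXiv:1004.1320 — 6 statements merged into one kernel-verified Lean document; each statement's English description precedes it below -/
import Mathlib

section
/- Let X be a left module over the quaternion algebra ℍ (with standard generators 1, i, j, k), and define S(a,b) = (b^a, a_b) with a^b = j·a + (1+i)·b and a_b = −j·a + (1+i)·b. Then S satisfies the set-theoretic Yang–Baxter equation (S × id)(id × S)(S × id) = (id × S)(S × id)(id × S). -/
namespace BiquandlePaper

variable {X : Type*}

/-- `F × id` acting on triples. -/
def m1 (F : X × X → X × X) : X × X × X → X × X × X :=
  fun p => ((F (p.1, p.2.1)).1, (F (p.1, p.2.1)).2, p.2.2)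

/-- `id × F` acting on triples. -/
def m2 (F : X × X → X × X) : X × X × X → X × X × X :=
  fun p => (p.1, F p.2)

/-- The set-theoretic Yang-Baxter equation. -/
def YB (F : X × X → X × X) : Prop :=
  m1 F ∘ m2 F ∘ m1 F = m2 F ∘ m1 F ∘ m2 F

/-- The switch associated to up and down operations: `S (a, b) = (b ^ a, a _ b)`. -/
def sw (up down : X → X → X) : X × X → X × X :=
  fun p => (up p.2 p.1, down p.1 p.2)

/-- The twist map. -/
def tw : X × X → X × X := fun p => (p.2, p.1)

/-- Biquandle axiom B1. -/
def B1 (up down : X → X → X) : Prop :=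
  ∀ a : X, (∃! x : X, up a x = x ∧ down x a = a) ∧ (∃! y : X, down a y = y ∧ up y a = a)

/-- The quaternion `i`. -/
noncomputable def qi : Quaternion ℝ := ⟨0, 1, 0, 0⟩

/-- The quaternion `j`. -/
noncomputable def qj : Quaternion ℝ := ⟨0, 0, 1, 0⟩

/-! A switch of the form `S (a, b) = (A a + B b, C a + D b)` acts on `X³` through the block
matrices `S × id` and `id × S` over the scalar ring, so the Yang–Baxter equation reduces to
seven identities among `A, B, C, D`, `hᵢⱼ` comparing the `(i, j)` entries of the two triple
products. For the Budapest biquandle `A = D = 1 + i`, `B = j`, `C = -j`, and these identities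
hold in `ℍ`; e.g. `A² + B A C = 2i + (1 - i) = A`. -/

open scoped Quaternion

theorem YB_sw_linear {R : Type*} [Semiring R] [AddCommMonoid X] [Module R X] {A B C D : R}
    (h11 : A * A + B * A * C = A) (h12 : A * B + B * A * D = B * A)
    (h21 : C * A + D * A * C = A * C) (h22 : C * B + D * A * D = A * D * A + B * C)
    (h23 : D * B = A * D * B + B * D) (h32 : C * D = C * D * A + D * C)
    (h33 : D = C * D * B + D * D) :
    YB (sw (fun x y : X => B • x + A • y) (fun x y => C • x + D • y)) := by
  unfold YB
  funext ⟨a, b, c⟩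
  simp only [m1, m2, sw, Function.comp, Prod.mk.injEq, smul_add, smul_smul]
  refine ⟨?_, ?_, ?_⟩ <;> match_scalars <;> grind

/-- the Budapest biquandle `a^b = j a + (1+i) b`, `a_b = -j a + (1+i) b` on a
left module over the real quaternions satisfies the set-theoretic Yang-Baxter equation. -/
theorem budapest_biquandle_YB (X : Type*) [AddCommGroup X] [Module (Quaternion ℝ) X] :
    YB (sw (fun a b : X => qj • a + ((1 : Quaternion ℝ) + qi) • b)
           (fun a b : X => (-qj) • a + ((1 : Quaternion ℝ) + qi) • b)) := by
  -- `qi`, `qj` are unfolded only in a second pass: the component lemmas of `ℍ` do not fire on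
  -- bare anonymous constructors.
  apply YB_sw_linear <;> ext <;> simp <;> simp [qi, qj]
end BiquandlePaper
end

section
/- Let G be a group and define W : G × G → G × G by W(a,b) = (a²b, b⁻¹a⁻¹b). Then W is invertible and satisfies the set-theoretic Yang–Baxter equation (W × id)(id × W)(W × id) = (id × W)(W × id)(id × W). -/
namespace BiquandlePaper

variable {X : Type*}

/- `W` preserves the product: `a ^ 2 * b * (b⁻¹ * a⁻¹ * b) = a * b`. Hence from `(c, d) = W (a, b)`
one reads off `a = c * (c * d)⁻¹` and `b = a⁻¹ * (c * d) = c * d ^ 2`. -/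
def wada (G : Type*) [Group G] : G × G ≃ G × G where
  toFun p := (p.1 ^ 2 * p.2, p.2⁻¹ * p.1⁻¹ * p.2)
  invFun q := (q.1 * q.2⁻¹ * q.1⁻¹, q.1 * q.2 ^ 2)
  left_inv _ := by ext <;> simp only [sq] <;> group
  right_inv _ := by ext <;> simp only [sq] <;> group

theorem yb_wada (G : Type*) [Group G] : YB (wada G) := by
  funext ⟨a, b, c⟩
  ext <;> simp only [Function.comp_apply, m1, m2, wada, Equiv.coe_fn_mk, sq] <;> group

/-- Wada's map `W (a, b) = (a² b, b⁻¹ a⁻¹ b)` on a group is invertible and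
satisfies the set-theoretic Yang-Baxter equation. -/
theorem wada_switch (G : Type*) [Group G] :
    Function.Bijective (fun p : G × G => (p.1 ^ 2 * p.2, p.2⁻¹ * p.1⁻¹ * p.2)) ∧
    YB (fun p : G × G => (p.1 ^ 2 * p.2, p.2⁻¹ * p.1⁻¹ * p.2)) :=
  ⟨(wada G).bijective, yb_wada G⟩

end BiquandlePaper
end

section
/- Let G be a group equipped with two commuting automorphisms x, y (an action of ℤ²), writing a·x and a·y for the images. Define S(a,b) = (b·y, (b·xy)⁻¹ (a·x) b). Then S is invertible and satisfies the set-theoretic Yang–Baxter equation (S × id)(id × S)(S × id) = (id × S)(S × id)(id × S). -/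
/-!
The inverse of the switch comes from solving `S (a, b) = (c, d)` first for `b`, then for `a`.
For the Yang–Baxter equation both sides are expanded into words in the
images of `a, b, c` under `x` and `y`; once `x` and `y` commute, the extra factors on the right
cancel in pairs and the two words coincide.
-/

namespace BiquandlePaper

variable {X : Type*}

section SilverWilliams

variable {G : Type*} [Group G] (x y : G ≃* G)

def silverWilliams (p : G × G) : G × G :=
  (y p.2, (y (x p.2))⁻¹ * x p.1 * p.2)

def silverWilliamsInv (q : G × G) : G × G :=
  (x.symm (y (x (y.symm q.1)) * q.2 * (y.symm q.1)⁻¹), y.symm q.1)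

theorem silverWilliamsInv_silverWilliams :
    Function.LeftInverse (silverWilliamsInv x y) (silverWilliams x y) := by
  rintro ⟨a, b⟩
  simp [silverWilliams, silverWilliamsInv, mul_assoc]

theorem silverWilliams_silverWilliamsInv :
    Function.RightInverse (silverWilliamsInv x y) (silverWilliams x y) := by
  rintro ⟨c, d⟩
  simp [silverWilliams, silverWilliamsInv, mul_assoc]

theorem silverWilliams_bijective : Function.Bijective (silverWilliams x y) :=
  Function.bijective_iff_has_inverse.mpr
    ⟨_, silverWilliamsInv_silverWilliams x y, silverWilliams_silverWilliamsInv x y⟩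

theorem m1_m2_m1_silverWilliams (a b c : G) :
    (m1 (silverWilliams x y) ∘ m2 (silverWilliams x y) ∘ m1 (silverWilliams x y)) (a, b, c) =
      (y (y c), (y (x (y c)))⁻¹ * x (y b) * y c,
        (y (x c))⁻¹ * (x (y (x b)))⁻¹ * x (x a) * x b * c) := by
  simp [m1, m2, silverWilliams, mul_assoc]

theorem m2_m1_m2_silverWilliams (a b c : G) :
    (m2 (silverWilliams x y) ∘ m1 (silverWilliams x y) ∘ m2 (silverWilliams x y)) (a, b, c) =
      (y (y c), (y (y (x c)))⁻¹ * y (x b) * y c,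
        (y (x c))⁻¹ * (y (x (x b)))⁻¹ * y (x (y (x c))) * (x (y (x (y c))))⁻¹ * x (x a) *
          x (y c) * (y (x c))⁻¹ * x b * c) := by
  simp [m1, m2, silverWilliams, mul_assoc]

theorem yangBaxter_silverWilliams (hxy : ∀ a : G, x (y a) = y (x a)) :
    YB (silverWilliams x y) := by
  funext ⟨a, b, c⟩
  rw [m1_m2_m1_silverWilliams, m2_m1_m2_silverWilliams]
  simp [hxy, mul_assoc]

end SilverWilliams

/-- the Silver-Williams map `S (a, b) = (b·y, (b·xy)⁻¹ (a·x) b)` associated to a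
pair of commuting automorphisms `x, y` of a group `G` is invertible and satisfies the
set-theoretic Yang-Baxter equation. -/
theorem silver_williams_switch (G : Type*) [Group G] (x y : G ≃* G)
    (hcomm : ∀ a : G, x (y a) = y (x a)) :
    Function.Bijective (fun p : G × G => (y p.2, (y (x p.2))⁻¹ * x p.1 * p.2)) ∧
    YB (fun p : G × G => (y p.2, (y (x p.2))⁻¹ * x p.1 * p.2)) :=
  ⟨silverWilliams_bijective x y, yangBaxter_silverWilliams x y hcomm⟩

end BiquandlePaper
end

section
/- Let S(a,b) = (b^a, a_b) be a biquandle on X and T the twist T(a,b) = (b,a). Then the first forbidden-move relation T₁S₂S₁ = S₂S₁T₂ holds on X³ if and only if for all a, b, c ∈ X: a_{b c} = a_{c b} (the down operation is commutative when iterated) and a^{b_c} = a^b (the up operation does not see down-modifications of the exponent). -/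
namespace BiquandlePaper

variable {X : Type*}

section ForbiddenMove

variable (up down : X → X → X)

theorem tw_sw_sw_apply (a b c : X) :
    (m1 tw ∘ m2 (sw up down) ∘ m1 (sw up down)) (a, b, c) =
      (up c (down a b), up b a, down (down a b) c) :=
  rfl

theorem sw_sw_tw_apply (a b c : X) :
    (m2 (sw up down) ∘ m1 (sw up down) ∘ m2 tw) (a, b, c) =
      (up c a, up b (down a c), down (down a c) b) :=
  rfl

end ForbiddenMove

theorem forbidden_move_iff_general (up down : X → X → X) :
    (m1 (tw : X × X → X × X) ∘ m2 (sw up down) ∘ m1 (sw up down) =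
        m2 (sw up down) ∘ m1 (sw up down) ∘ m2 tw) ↔
      ((∀ a b c : X, down (down a b) c = down (down a c) b) ∧
       (∀ a b c : X, up a (down b c) = up a b)) := by
  simp only [funext_iff, Prod.forall, tw_sw_sw_apply, sw_sw_tw_apply, Prod.mk.injEq]
  constructor
  · intro h
    exact ⟨fun a b c => (h a b c).2.2, fun a b c => (h b c a).1⟩
  · rintro ⟨h_down, h_up⟩ a b c
    exact ⟨h_up c a b, (h_up b a c).symm, h_down a b c⟩

/-- for a biquandle `S` and the twist `T`, the first forbidden-move relation
`T₁S₂S₁ = S₂S₁T₂` holds iff `a_{bc} = a_{cb}` and `a^{b_c} = a^b` for all `a, b, c`. -/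
theorem forbidden_move_iff (up down : X → X → X)
    (hup : ∀ b : X, Function.Bijective fun a => up a b)
    (hdown : ∀ b : X, Function.Bijective fun a => down a b)
    (hYB : YB (sw up down)) (hB1 : B1 up down) :
    (m1 (tw : X × X → X × X) ∘ m2 (sw up down) ∘ m1 (sw up down) =
        m2 (sw up down) ∘ m1 (sw up down) ∘ m2 tw) ↔
      ((∀ a b c : X, down (down a b) c = down (down a c) b) ∧
       (∀ a b c : X, up a (down b c) = up a b)) :=
  forbidden_move_iff_general up down
end BiquandlePaper
end

section
/- Let (S,T) be a virtual invariant pair on a finite set X with |X| = n, and let f_w be the permutation of Xⁿ (for the appropriate strand number) associated to a braid word w. If w and w' present the same welded link via a stabilization Markov move w' = wρ with ρ ∈ {σₙ, σₙ⁻¹, τₙ}, then there is a bijection between the fixed point sets Fix(f_w) ⊆ Xⁿ and Fix(f_{w'}) ⊆ X^{n+1}. -/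
namespace BiquandlePaper

variable {X : Type*}

/-- A letter of a virtual braid word: `Sum.inl i` is the virtual generator `τᵢ`, and
`Sum.inr (true, i)`, `Sum.inr (false, i)` are `σᵢ` and `σᵢ⁻¹` respectively
(0-based, acting on strands `i` and `i+1`). -/
def Letter : Type := ℕ ⊕ (Bool × ℕ)

/-- The index of the strands on which a letter acts. -/
def Letter.idx : Letter → ℕ := Sum.elim id Prod.snd

/-- Apply a map `F : X² → X²` to the coordinates `i, i+1` of a tuple in `Xⁿ`. -/
def applyPair (n : ℕ) (F : X × X → X × X) (i : ℕ) (g : Fin n → X) : Fin n → X :=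
  if h : i + 1 < n then
    fun k =>
      if (k : ℕ) = i then (F (g ⟨i, Nat.lt_of_succ_lt h⟩, g ⟨i + 1, h⟩)).1
      else if (k : ℕ) = i + 1 then (F (g ⟨i, Nat.lt_of_succ_lt h⟩, g ⟨i + 1, h⟩)).2
      else g k
  else g

/-- The action of a single letter on `Xⁿ`, where `σᵢ ↦ Sᵢ`, `σᵢ⁻¹ ↦ (S⁻¹)ᵢ`, `τᵢ ↦ Tᵢ`. -/
def step (n : ℕ) (S Sinv T : X × X → X × X) : Letter → (Fin n → X) → (Fin n → X)
  | Sum.inl i => applyPair n T i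
  | Sum.inr (true, i) => applyPair n S i
  | Sum.inr (false, i) => applyPair n Sinv i

/-- The map `f_{(S,T)} : Xⁿ → Xⁿ` associated to a braid word. -/
def evalWord (n : ℕ) (S Sinv T : X × X → X × X) (w : List Letter) (g : Fin n → X) :
    Fin n → X :=
  w.foldl (fun h l => step n S Sinv T l h) g

/-!
The word `w` does not touch the last strand, so `f_{wρ}` sends `(h, x)` to `f_w h` followed by
the crossing `ρ` on the pair `(f_w h)ₙ, x`. Hence `(h, x)` is fixed iff `h` is fixed by `f_w` and
`x` closes the kink, i.e. the crossing fixes `(hₙ, x)`. For a switch `S` with `a ↦ a _ b`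
injective on a finite set, the B1 solutions `β a` of `a _ y = y` form an injective, hence
surjective, map; so `β a` is the only solution, which makes the closing colour unique and forces
the old strand to keep its colour. `S⁻¹` has the same fixed pairs as `S`.
-/

variable {S Sinv T : X × X → X × X}

theorem applyPair_snoc {n : ℕ} (F : X × X → X × X) {i : ℕ} (hi : i + 1 < n)
    (g : Fin n → X) (x : X) :
    applyPair (n + 1) F i (Fin.snoc g x) = Fin.snoc (applyPair n F i g) x := by
  funext k
  induction k using Fin.lastCases with
  | last =>
    simp [applyPair, Nat.lt_succ_of_lt hi, show n ≠ i by omega, show n ≠ i + 1 by omega]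
  | cast j => simp [applyPair, hi, Nat.lt_succ_of_lt hi, Fin.snoc, Nat.lt_of_succ_lt hi]

theorem applyPair_snoc_last {m : ℕ} (F : X × X → X × X) (g : Fin (m + 1) → X) (x : X) :
    applyPair (m + 2) F m (Fin.snoc g x) =
      Fin.snoc (Function.update g (Fin.last m) (F (g (Fin.last m), x)).1)
        (F (g (Fin.last m), x)).2 := by
  funext k
  induction k using Fin.lastCases with
  | last => simp [applyPair, Fin.snoc, Fin.last]
  | cast j =>
    have hj : (j : ℕ) ≠ m + 1 := by omega
    rcases eq_or_ne j (Fin.last m) with rfl | hjm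
    · simp [applyPair, Fin.snoc, Fin.last]
    · have hjm' : (j : ℕ) ≠ m := fun h => hjm (Fin.ext h)
      simp [applyPair, Fin.snoc, hj, hjm, hjm', Fin.is_le j]

theorem step_snoc {n : ℕ} {l : Letter} (hl : l.idx + 2 ≤ n) (g : Fin n → X) (x : X) :
    step (n + 1) S Sinv T l (Fin.snoc g x) = Fin.snoc (step n S Sinv T l g) x := by
  have hi : l.idx + 1 < n := by omega
  obtain i | ⟨_ | _, i⟩ := l <;> exact applyPair_snoc _ hi g x

theorem evalWord_snoc {n : ℕ} {w : List Letter} (hw : ∀ l ∈ w, l.idx + 2 ≤ n)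
    (g : Fin n → X) (x : X) :
    evalWord (n + 1) S Sinv T w (Fin.snoc g x) = Fin.snoc (evalWord n S Sinv T w g) x := by
  induction w generalizing g with
  | nil => rfl
  | cons l w ih =>
    simp only [evalWord, List.foldl_cons] at ih ⊢
    rw [step_snoc (hw l List.mem_cons_self)]
    exact ih (fun l' hl' => hw l' (List.mem_cons_of_mem l hl')) _

theorem evalWord_eq_snoc_init {n : ℕ} {w : List Letter} (hw : ∀ l ∈ w, l.idx + 2 ≤ n)
    (g : Fin (n + 1) → X) :
    evalWord (n + 1) S Sinv T w g =
      Fin.snoc (evalWord n S Sinv T w (Fin.init g)) (g (Fin.last n)) := by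
  conv_lhs => rw [← Fin.snoc_init_self g]
  exact evalWord_snoc hw _ _

theorem evalWord_append_singleton (n : ℕ) (w : List Letter) (l : Letter) (g : Fin n → X) :
    evalWord n S Sinv T (w ++ [l]) g = step n S Sinv T l (evalWord n S Sinv T w g) := by
  simp [evalWord]

/-- Closing a kink at a crossing `F`: each colour `a` on the old strand extends to a unique
colour `y` of the new strand, and a colour of the new strand that closes up forces the old
strand to leave the crossing with its incoming colour. -/
structure Stabilizable (F : X × X → X × X) : Prop where
  existsUnique_apply_eq_self : ∀ a, ∃! y, F (a, y) = (a, y)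
  eq_of_apply_eq : ∀ a b y, F (a, y) = (b, y) → b = a

namespace Stabilizable

variable {F : X × X → X × X} (hF : Stabilizable F)

noncomputable def kink (a : X) : X := (hF.existsUnique_apply_eq_self a).choose

include hF in
theorem apply_eq_self_iff {a y : X} : F (a, y) = (a, y) ↔ y = hF.kink a :=
  ⟨fun h => (hF.existsUnique_apply_eq_self a).unique h
      (hF.existsUnique_apply_eq_self a).choose_spec.1,
    fun h => h ▸ (hF.existsUnique_apply_eq_self a).choose_spec.1⟩

include hF in
theorem of_inverse {G : X × X → X × X} (hGF : Function.LeftInverse G F)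
    (hFG : Function.LeftInverse F G) : Stabilizable G where
  existsUnique_apply_eq_self a := by
    obtain ⟨y, hy, huniq⟩ := hF.existsUnique_apply_eq_self a
    exact ⟨y, Function.IsFixedPt.to_leftInverse hy hGF,
      fun z hz => huniq z (Function.IsFixedPt.to_leftInverse hz hFG)⟩
  eq_of_apply_eq a b y h := (hF.eq_of_apply_eq b a y (h ▸ hFG (a, y))).symm

theorem applyPair_snoc_eq_snoc_iff {m : ℕ} (h h' : Fin (m + 1) → X) (x : X) :
    applyPair (m + 2) F m (Fin.snoc h x) = Fin.snoc h' x ↔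
      h = h' ∧ x = hF.kink (h (Fin.last m)) := by
  rw [applyPair_snoc_last, Fin.snoc_inj, Function.update_eq_iff, ← hF.apply_eq_self_iff]
  constructor
  · rintro ⟨⟨hlast, hrest⟩, hnew⟩
    have hFx : F (h (Fin.last m), x) = (h' (Fin.last m), x) := Prod.ext hlast hnew
    have hlast' := hF.eq_of_apply_eq _ _ _ hFx
    refine ⟨funext fun j => ?_, hlast' ▸ hFx⟩
    by_cases hj : j = Fin.last m
    · exact hj ▸ hlast'.symm
    · exact hrest j hj
  · rintro ⟨rfl, hfix⟩
    simp [hfix]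

noncomputable def fixedPointsEquiv {m : ℕ} (f : (Fin (m + 1) → X) → Fin (m + 1) → X) :
    {h // f h = h} ≃
      {g : Fin (m + 2) → X //
        applyPair (m + 2) F m (Fin.snoc (f (Fin.init g)) (g (Fin.last (m + 1)))) = g} where
  toFun h := ⟨Fin.snoc h.1 (hF.kink (h.1 (Fin.last m))), by
    rw [Fin.init_snoc, Fin.snoc_last, h.2, hF.applyPair_snoc_eq_snoc_iff]
    exact ⟨rfl, rfl⟩⟩
  invFun g := ⟨Fin.init g.1, by
    have hg := g.2
    conv_rhs at hg => rw [← Fin.snoc_init_self g.1]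
    exact ((hF.applyPair_snoc_eq_snoc_iff _ _ _).1 hg).1⟩
  left_inv h := Subtype.ext (Fin.init_snoc (α := fun _ => X) _ h.1)
  right_inv g := by
    have hg := g.2
    conv_rhs at hg => rw [← Fin.snoc_init_self g.1]
    obtain ⟨hfix, hlast⟩ := (hF.applyPair_snoc_eq_snoc_iff _ _ _).1 hg
    refine Subtype.ext ?_
    rw [hfix] at hlast
    dsimp only
    rw [← hlast]
    exact Fin.snoc_init_self g.1

noncomputable def evalWordFixedPointsEquiv {m : ℕ} {w : List Letter}
    (hw : ∀ l ∈ w, l.idx + 2 ≤ m + 1) {ρ : Letter}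
    (hρ : step (m + 2) S Sinv T ρ = applyPair (m + 2) F m) :
    {g // evalWord (m + 1) S Sinv T w g = g} ≃
      {g // evalWord (m + 2) S Sinv T (w ++ [ρ]) g = g} :=
  (hF.fixedPointsEquiv _).trans <| Equiv.subtypeEquivRight fun g => by
    rw [evalWord_append_singleton, hρ, evalWord_eq_snoc_init hw]

end Stabilizable

theorem existsUnique_down_eq_self [Finite X] {down : X → X → X}
    (hdown : ∀ b, Function.Injective fun a => down a b) (hex : ∀ a, ∃ y, down a y = y)
    (a : X) : ∃! y, down a y = y := by
  choose β hβ using hex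
  have hβ_inj : Function.Injective β := fun a a' h =>
    hdown (β a) (show down a (β a) = down a' (β a) by rw [hβ a, h, hβ a'])
  refine ⟨β a, hβ a, fun y hy => ?_⟩
  obtain ⟨a', rfl⟩ := Finite.surjective_of_injective hβ_inj y
  rw [hdown (β a') (hy.trans (hβ a').symm)]

theorem stabilizable_sw [Finite X] {up down : X → X → X}
    (hdown : ∀ b, Function.Injective fun a => down a b)
    (hB1 : ∀ a, ∃ y, down a y = y ∧ up y a = a) : Stabilizable (sw up down) := by
  have huniq := existsUnique_down_eq_self hdown fun a => (hB1 a).imp fun _ => And.left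
  have hup {a y : X} (hy : down a y = y) : up y a = a := by
    obtain ⟨y₀, hdown₀, hup₀⟩ := hB1 a
    rwa [(huniq a).unique hy hdown₀]
  refine ⟨fun a => ?_, fun a b y h => ?_⟩
  · obtain ⟨y, hy, hy_uniq⟩ := huniq a
    exact ⟨y, Prod.ext (hup hy) hy, fun z hz => hy_uniq z (congrArg Prod.snd hz)⟩
  · obtain ⟨hb, hy⟩ := Prod.ext_iff.1 h
    exact hb.symm.trans (hup hy)

theorem fixed_points_stabilization_general [Fintype X] (n : ℕ) (hn : 1 ≤ n)
    (up down tup tdown : X → X → X)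
    (hdown : ∀ b : X, Function.Bijective fun a => down a b)
    (htdown : ∀ b : X, Function.Bijective fun a => tdown a b)
    (S Sinv T : X × X → X × X)
    (hS : S = sw up down) (hT : T = sw tup tdown)
    (hSinv : Sinv ∘ S = id) (hSinv' : S ∘ Sinv = id)
    (hB1S : B1 up down) (hB1T : B1 tup tdown)
    (w : List Letter) (hw : ∀ l ∈ w, Letter.idx l + 2 ≤ n)
    (ρ : Letter)
    (hρ : ρ = Sum.inl (n - 1) ∨ ρ = Sum.inr (true, n - 1) ∨ ρ = Sum.inr (false, n - 1)) :
    Nonempty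
      ({g : Fin n → X // evalWord n S Sinv T w g = g} ≃
        {g : Fin (n + 1) → X // evalWord (n + 1) S Sinv T (w ++ [ρ]) g = g}) := by
  obtain ⟨m, rfl⟩ : ∃ m, n = m + 1 := ⟨n - 1, by omega⟩
  subst hS hT
  have hσ := stabilizable_sw (fun b => (hdown b).1) fun a => (hB1S a).2.exists
  have hτ := stabilizable_sw (fun b => (htdown b).1) fun a => (hB1T a).2.exists
  have hσinv := hσ.of_inverse (Function.leftInverse_iff_comp.2 hSinv)
    (Function.leftInverse_iff_comp.2 hSinv')
  rcases hρ with rfl | rfl | rfl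
  exacts [⟨hτ.evalWordFixedPointsEquiv hw rfl⟩, ⟨hσ.evalWordFixedPointsEquiv hw rfl⟩,
    ⟨hσinv.evalWordFixedPointsEquiv hw rfl⟩]

/-- stabilization Markov move `w ↦ w ρ` with `ρ ∈ {σₙ, σₙ⁻¹, τₙ}` induces a
bijection between the fixed point sets of `f_w` on `Xⁿ` and of `f_{wρ}` on `X^{n+1}`. -/
theorem fixed_points_stabilization [Fintype X] (n : ℕ) (hn : 1 ≤ n)
    (up down tup tdown : X → X → X)
    (hup : ∀ b : X, Function.Bijective fun a => up a b)
    (hdown : ∀ b : X, Function.Bijective fun a => down a b)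
    (htup : ∀ b : X, Function.Bijective fun a => tup a b)
    (htdown : ∀ b : X, Function.Bijective fun a => tdown a b)
    (S Sinv T : X × X → X × X)
    (hS : S = sw up down) (hT : T = sw tup tdown)
    (hSinv : Sinv ∘ S = id) (hSinv' : S ∘ Sinv = id)
    (hTT : T ∘ T = id)
    (hB1S : B1 up down) (hB1T : B1 tup tdown)
    (hYB : YB S)
    (hvirt : m1 T ∘ m2 S ∘ m1 T = m2 T ∘ m1 S ∘ m2 T)
    (w : List Letter) (hw : ∀ l ∈ w, Letter.idx l + 2 ≤ n)
    (ρ : Letter)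
    (hρ : ρ = Sum.inl (n - 1) ∨ ρ = Sum.inr (true, n - 1) ∨ ρ = Sum.inr (false, n - 1)) :
    Nonempty
      ({g : Fin n → X // evalWord n S Sinv T w g = g} ≃
        {g : Fin (n + 1) → X // evalWord (n + 1) S Sinv T (w ++ [ρ]) g = g}) :=
  fixed_points_stabilization_general n hn up down tup tdown hdown htdown S Sinv T hS hT hSinv hSinv'
    hB1S hB1T w hw ρ hρ

end BiquandlePaper
end

section
/- Let S be a birack on X and σ a permutation of X. Define new operations a ∧ b = σ(σ⁻¹(a)^{σ⁻¹(b)}) and a ∨ b = σ(σ⁻¹(a)_{σ⁻¹(b)}). Then the resulting switch σ#(S)(a,b) = (b ∧ a, a ∨ b) also satisfies invertibility and the Yang–Baxter equation; and if S satisfies biquandle axiom B1 then so does σ#(S). -/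
/-! The pushed-forward switch is the conjugate `(σ × σ) ∘ S ∘ (σ × σ)⁻¹` of `S`, and bijectivity,
the Yang–Baxter equation and axiom B1 are all invariant under transport along a bijection. -/

namespace BiquandlePaper

variable {X : Type*}

variable {Y : Type*}

def transportOp (e : X ≃ Y) (op : X → X → X) : Y → Y → Y :=
  fun a b => e (op (e.symm a) (e.symm b))

@[simp]
lemma transportOp_apply_apply (e : X ≃ Y) (op : X → X → X) (a b : X) :
    transportOp e op (e a) (e b) = e (op a b) := by
  simp [transportOp]

lemma sw_transportOp (e : X ≃ Y) (up down : X → X → X) :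
    sw (transportOp e up) (transportOp e down) = (e.prodCongr e).conj (sw up down) :=
  rfl

lemma m1_conj (e : X ≃ Y) (F : X × X → X × X) :
    m1 ((e.prodCongr e).conj F) = (e.prodCongr (e.prodCongr e)).conj (m1 F) := by
  funext p
  simp [m1]

lemma m2_conj (e : X ≃ Y) (F : X × X → X × X) :
    m2 ((e.prodCongr e).conj F) = (e.prodCongr (e.prodCongr e)).conj (m2 F) := by
  funext p
  simp [m2]

lemma YB.conj {F : X × X → X × X} (hF : YB F) (e : X ≃ Y) : YB ((e.prodCongr e).conj F) := by
  unfold YB at hF ⊢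
  rw [m1_conj, m2_conj, ← Equiv.conj_comp, ← Equiv.conj_comp, ← Equiv.conj_comp,
    ← Equiv.conj_comp, hF]

lemma _root_.Function.Bijective.equivConj {f : X → X} (hf : Function.Bijective f) (e : X ≃ Y) :
    Function.Bijective (e.conj f) :=
  e.bijective.comp (hf.comp e.symm.bijective)

lemma B1.transportOp {up down : X → X → X} (h : B1 up down) (e : X ≃ Y) :
    B1 (transportOp e up) (transportOp e down) := by
  intro a
  obtain ⟨a, rfl⟩ := e.surjective a
  simp only [← e.existsUnique_congr_right, transportOp_apply_apply, e.apply_eq_iff_eq]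
  exact h a

theorem birack_pushforward_general (up down : X → X → X)
    (hbij : Function.Bijective (sw up down))
    (hYB : YB (sw up down)) (σ : Equiv.Perm X) :
    Function.Bijective
      (sw (fun a b => σ (up (σ.symm a) (σ.symm b))) (fun a b => σ (down (σ.symm a) (σ.symm b)))) ∧
    YB (sw (fun a b => σ (up (σ.symm a) (σ.symm b)))
           (fun a b => σ (down (σ.symm a) (σ.symm b)))) ∧
    (B1 up down →
      B1 (fun a b => σ (up (σ.symm a) (σ.symm b)))
         (fun a b => σ (down (σ.symm a) (σ.symm b)))) := by
  change Function.Bijective (sw (transportOp σ up) (transportOp σ down)) ∧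
    YB (sw (transportOp σ up) (transportOp σ down)) ∧
    (B1 up down → B1 (transportOp σ up) (transportOp σ down))
  rw [sw_transportOp]
  exact ⟨hbij.equivConj _, hYB.conj σ, fun h => h.transportOp σ⟩

/-- pushing a birack forward along a permutation `σ` of `X` via
`a ∧ b = σ(σ⁻¹(a)^{σ⁻¹(b)})`, `a ∨ b = σ(σ⁻¹(a)_{σ⁻¹(b)})` again yields a birack, and axiom
B1 is preserved. -/
theorem birack_pushforward (up down : X → X → X)
    (hup : ∀ b : X, Function.Bijective fun a => up a b)
    (hdown : ∀ b : X, Function.Bijective fun a => down a b)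
    (hbij : Function.Bijective (sw up down))
    (hYB : YB (sw up down)) (σ : Equiv.Perm X) :
    Function.Bijective
      (sw (fun a b => σ (up (σ.symm a) (σ.symm b))) (fun a b => σ (down (σ.symm a) (σ.symm b)))) ∧
    YB (sw (fun a b => σ (up (σ.symm a) (σ.symm b)))
           (fun a b => σ (down (σ.symm a) (σ.symm b)))) ∧
    (B1 up down →
      B1 (fun a b => σ (up (σ.symm a) (σ.symm b)))
         (fun a b => σ (down (σ.symm a) (σ.symm b)))) :=
  birack_pushforward_general up down hbij hYB σ
end BiquandlePaper
end
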